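/- Let λ ∈ ℝ∖{0}, let ω = (ω̄,ω_n) ∈ S^{n-1} with ω_n > 0 and 1/c_−² ≥ |ω̄|²/c_+², and let c₀ be as in the stratified-medium assumptions. Suppose g ∈ L²([−y_M, y_M], c₀^{−2}dy), with g, g' absolutely continuous, satisfies c₀²(λ²|ω̄|²/c_+² + D_y²)g − λ²g = 0 almost everywhere on [−y_M, y_M], together with the boundary conditions −iλω_n/c_+ · g(y_M) + g'(y_M) = 0 and iλ(1/c_−² − |ω̄|²/c_+²)^{1/2} g(−y_M) + g'(−y_M) = 0. Then g ≡ 0. -/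

import Mathlib

noncomputable section
open MeasureTheory Real Complex Filter
open scoped Nat

/-- `ES k` is Euclidean space `ℝ^k`. -/
abbrev ES (k : ℕ) := EuclideanSpace ℝ (Fin k)

/-- The last (`ω_n`) coordinate of `ω = (ω̄, ω_n) ∈ ℝ^d × ℝ`. -/
def ycoord {d : ℕ} (z : ES (d+1)) : ℝ := z (Fin.last d)

/-- The first `d` coordinates `ω̄` of `ω = (ω̄, ω_n)`. -/
def xpart {d : ℕ} (z : ES (d+1)) : ES d := WithLp.toLp 2 (fun i : Fin d => z i.castSucc)

/-- The stratified-medium assumptions on the one-dimensional sound speed `c0`. -/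
structure SoundSpeed where
  c0 : ℝ → ℝ
  cm : ℝ
  cM : ℝ
  yM : ℝ
  cp : ℝ
  cn : ℝ
  hcm_pos : 0 < cm
  hc0_bounds : ∀ y, cm ≤ c0 y ∧ c0 y ≤ cM
  hyM_pos : 0 < yM
  hc0_plus : ∀ y : ℝ, yM < y → c0 y = cp
  hc0_minus : ∀ y : ℝ, y < -yM → c0 y = cn
  hcpn : cp ≤ cn
  hc0_piecewise : ∃ S : Finset ℝ, (∀ y ∉ S, ContDiffAt ℝ (⊤ : ℕ∞) c0 y) ∧
    ∀ k : ℕ, ∃ C : ℝ, ∀ y ∉ S, |iteratedDeriv k c0 y| ≤ C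

lemma triangle_swap {a b : ℝ} {f h : ℝ → ℂ}
    (hf : IntegrableOn f (Set.Ioc a b) volume) (hh : IntegrableOn h (Set.Ioc a b) volume) :
    (∫ t in Set.Ioc a b, f t * ∫ s in a..t, h s)
      = ∫ s in Set.Ioc a b, (∫ t in s..b, f t) * h s := by
  set μ := volume.restrict (Set.Ioc a b) with hμ
  set K : ℝ × ℝ → ℂ := Set.indicator {p : ℝ × ℝ | p.2 ≤ p.1} (fun p => f p.1 * h p.2) with hKdef
  have hmeas : MeasurableSet {p : ℝ × ℝ | p.2 ≤ p.1} :=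
    (isClosed_le continuous_snd continuous_fst).measurableSet
  have hK : Integrable K (μ.prod μ) := (hf.mul_prod hh).indicator hmeas
  have swap : (∫ t, ∫ s, K (t, s) ∂μ ∂μ) = ∫ s, ∫ t, K (t, s) ∂μ ∂μ :=
    integral_integral_swap (f := fun t s => K (t, s)) hK
  have L : ∀ t ∈ Set.Ioc a b, (∫ s, K (t, s) ∂μ) = f t * ∫ s in a..t, h s := by
    intro t ht
    have e1 : ∀ s, K (t, s) = Set.indicator (Set.Iic t) (fun s => f t * h s) s := by
      intro s
      by_cases hs : s ≤ t <;> simp [hKdef, Set.indicator_apply, hs]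
    calc (∫ s, K (t, s) ∂μ) = ∫ s in Set.Ioc a b, Set.indicator (Set.Iic t) (fun s => f t * h s) s := by
          rw [hμ]; exact integral_congr_ae (Filter.Eventually.of_forall e1)
      _ = ∫ s in Set.Ioc a b ∩ Set.Iic t, f t * h s := setIntegral_indicator measurableSet_Iic
      _ = ∫ s in Set.Ioc a t, f t * h s := by rw [Set.Ioc_inter_Iic, min_eq_right ht.2]
      _ = f t * ∫ s in Set.Ioc a t, h s := integral_const_mul _ _
      _ = f t * ∫ s in a..t, h s := by rw [intervalIntegral.integral_of_le ht.1.le]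
  have R : ∀ s ∈ Set.Ioc a b, (∫ t, K (t, s) ∂μ) = (∫ t in s..b, f t) * h s := by
    intro s hs
    have e1 : ∀ t, K (t, s) = Set.indicator (Set.Ici s) (fun t => f t * h s) t := by
      intro t
      by_cases hts : s ≤ t <;> simp [hKdef, Set.indicator_apply, hts]
    have hset : Set.Ioc a b ∩ Set.Ici s = Set.Icc s b := by
      ext t
      simp only [Set.mem_inter_iff, Set.mem_Ioc, Set.mem_Ici, Set.mem_Icc]
      constructor
      · rintro ⟨⟨_, h2⟩, h3⟩; exact ⟨h3, h2⟩
      · rintro ⟨h1, h2⟩; exact ⟨⟨lt_of_lt_of_le hs.1 h1, h2⟩, h1⟩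
    calc (∫ t, K (t, s) ∂μ) = ∫ t in Set.Ioc a b, Set.indicator (Set.Ici s) (fun t => f t * h s) t := by
          rw [hμ]; exact integral_congr_ae (Filter.Eventually.of_forall e1)
      _ = ∫ t in Set.Ioc a b ∩ Set.Ici s, f t * h s := setIntegral_indicator measurableSet_Ici
      _ = ∫ t in Set.Icc s b, f t * h s := by rw [hset]
      _ = ∫ t in Set.Ioc s b, f t * h s := integral_Icc_eq_integral_Ioc
      _ = (∫ t in Set.Ioc s b, f t) * h s := integral_mul_const _ _
      _ = (∫ t in s..b, f t) * h s := by rw [intervalIntegral.integral_of_le hs.2]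
  calc (∫ t in Set.Ioc a b, f t * ∫ s in a..t, h s)
      = ∫ t, ∫ s, K (t, s) ∂μ ∂μ := (setIntegral_congr_fun measurableSet_Ioc (fun t ht => (L t ht).symm))
    _ = ∫ s, ∫ t, K (t, s) ∂μ ∂μ := swap
    _ = ∫ s in Set.Ioc a b, (∫ t in s..b, f t) * h s :=
        setIntegral_congr_fun measurableSet_Ioc (fun s hs => R s hs)

lemma prod_rep {a b : ℝ} (hab : a ≤ b) {f h F H : ℝ → ℂ}
    (hf : IntegrableOn f (Set.Icc a b) volume) (hh : IntegrableOn h (Set.Icc a b) volume)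
    (hF : ∀ y ∈ Set.Icc a b, F y = F a + ∫ t in a..y, f t)
    (hH : ∀ y ∈ Set.Icc a b, H y = H a + ∫ t in a..y, h t) :
    F b * H b - F a * H a = ∫ t in Set.Ioc a b, (f t * H t + F t * h t) := by
  have hfI : IntegrableOn f (Set.Ioc a b) volume := hf.mono_set Set.Ioc_subset_Icc_self
  have hhI : IntegrableOn h (Set.Ioc a b) volume := hh.mono_set Set.Ioc_subset_Icc_self
  have huIcc : Set.uIcc a b = Set.Icc a b := Set.uIcc_of_le hab
  have hUf_cont : ContinuousOn (fun y => ∫ s in a..y, f s) (Set.Icc a b) := by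
    have := intervalIntegral.continuousOn_primitive_interval (a := a) (b := b) (f := f)
      (μ := volume) (by rwa [huIcc])
    rwa [huIcc] at this
  have hUh_cont : ContinuousOn (fun y => ∫ s in a..y, h s) (Set.Icc a b) := by
    have := intervalIntegral.continuousOn_primitive_interval (a := a) (b := b) (f := h)
      (μ := volume) (by rwa [huIcc])
    rwa [huIcc] at this
  -- integrability of the four pieces on Ioc a b
  have i1 : IntegrableOn (fun t => f t * (H a + ∫ s in a..t, h s)) (Set.Ioc a b) volume :=
    (hf.mul_continuousOn (continuousOn_const.add hUh_cont) isCompact_Icc).mono_set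
      Set.Ioc_subset_Icc_self
  have i2 : IntegrableOn (fun t => (F a + ∫ s in a..t, f s) * h t) (Set.Ioc a b) volume :=
    (IntegrableOn.continuousOn_mul (continuousOn_const.add hUf_cont) hh isCompact_Icc).mono_set
      Set.Ioc_subset_Icc_self
  have i3 : IntegrableOn (fun t => f t * ∫ s in a..t, h s) (Set.Ioc a b) volume :=
    (hf.mul_continuousOn hUh_cont isCompact_Icc).mono_set Set.Ioc_subset_Icc_self
  have i4 : IntegrableOn (fun t => (∫ s in a..t, f s) * h t) (Set.Ioc a b) volume :=
    (IntegrableOn.continuousOn_mul hUf_cont hh isCompact_Icc).mono_set Set.Ioc_subset_Icc_self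
  have i5 : IntegrableOn (fun t => f t * H a) (Set.Ioc a b) volume := hfI.mul_const _
  have i6 : IntegrableOn (fun t => F a * h t) (Set.Ioc a b) volume := hhI.const_mul _
  -- rewrite the integrand using the representations
  have step1 : (∫ t in Set.Ioc a b, (f t * H t + F t * h t))
      = ∫ t in Set.Ioc a b,
          ((f t * H a + f t * ∫ s in a..t, h s)
            + (F a * h t + (∫ s in a..t, f s) * h t)) := by
    refine setIntegral_congr_fun measurableSet_Ioc (fun t ht => ?_)
    have htI : t ∈ Set.Icc a b := Set.Ioc_subset_Icc_self ht
    rw [hF t htI, hH t htI]; ring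
  have step2 : (∫ t in Set.Ioc a b,
          ((f t * H a + f t * ∫ s in a..t, h s)
            + (F a * h t + (∫ s in a..t, f s) * h t)))
      = (∫ t in Set.Ioc a b, f t * H a) + (∫ t in Set.Ioc a b, f t * ∫ s in a..t, h s)
        + ((∫ t in Set.Ioc a b, F a * h t) + ∫ t in Set.Ioc a b, (∫ s in a..t, f s) * h t) := by
    rw [integral_add
        (f := fun t => f t * H a + f t * ∫ s in a..t, h s)
        (g := fun t => F a * h t + (∫ s in a..t, f s) * h t) (i5.add i3) (i6.add i4),
      integral_add (f := fun t => f t * H a) (g := fun t => f t * ∫ s in a..t, h s) i5 i3,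
      integral_add (f := fun t => F a * h t) (g := fun t => (∫ s in a..t, f s) * h t) i6 i4]
  -- interval integrability for the sub-interval additivity
  have hfiab : IntervalIntegrable f volume a b := by
    rw [intervalIntegrable_iff_integrableOn_Ioc_of_le hab]; exact hfI
  have key : ∀ s ∈ Set.Ioc a b, (∫ t in s..b, f t) * h s
      = (∫ t in a..b, f t) * h s - (∫ t in a..s, f t) * h s := by
    intro s hs
    have hfias : IntervalIntegrable f volume a s := by
      rw [intervalIntegrable_iff_integrableOn_Ioc_of_le hs.1.le]
      exact hfI.mono_set (Set.Ioc_subset_Ioc le_rfl hs.2)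
    rw [← sub_mul, intervalIntegral.integral_interval_sub_left hfiab hfias]
  have step3 : (∫ t in Set.Ioc a b, f t * ∫ s in a..t, h s)
      = (∫ t in a..b, f t) * (∫ s in Set.Ioc a b, h s)
        - ∫ s in Set.Ioc a b, (∫ t in a..s, f t) * h s := by
    rw [triangle_swap hfI hhI,
      setIntegral_congr_fun measurableSet_Ioc (fun s hs => key s hs),
      integral_sub ((hhI.const_mul _) : IntegrableOn (fun s => (∫ t in a..b, f t) * h s) _ _) i4,
      integral_const_mul]
  have hFb := hF b ⟨hab, le_rfl⟩
  have hHb := hH b ⟨hab, le_rfl⟩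
  rw [step1, step2, step3, hFb, hHb, integral_const_mul, integral_mul_const,
    intervalIntegral.integral_of_le (f := f) hab, intervalIntegral.integral_of_le (f := h) hab]
  ring

lemma vanish_of_rep {a b : ℝ} {g g₁ g₂ : ℝ → ℂ} {Cq M : ℝ}
    (hCq : 0 ≤ Cq) (hM : 0 ≤ M)
    (hgM : ∀ y ∈ Set.Icc a b, ‖g y‖ ≤ M)
    (hg1c : ContinuousOn g₁ (Set.Icc a b))
    (hgc : ContinuousOn g (Set.Icc a b))
    (h2int : IntegrableOn g₂ (Set.Icc a b) volume)
    (hrep : ∀ y ∈ Set.Icc a b, g y = - ∫ t in y..b, g₁ t)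
    (hrep1 : ∀ y ∈ Set.Icc a b, g₁ y = - ∫ t in y..b, g₂ t)
    (hbound : ∀ᵐ t : ℝ, t ∈ Set.Icc a b → ‖g₂ t‖ ≤ Cq * ‖g t‖) :
    ∀ y ∈ Set.Icc a b, g y = 0 := by
  set C := max Cq 1 with hC
  have hC1 : (1:ℝ) ≤ C := le_max_right _ _
  have hC0 : (0:ℝ) ≤ C := zero_le_one.trans hC1
  have hCqC : Cq ≤ C := le_max_left _ _
  -- the elementary integral of (b - t)^n over y..b
  have hpow : ∀ (n : ℕ) (y : ℝ), y ≤ b →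
      (∫ t in y..b, (b - t)^n) = (b - y)^(n+1) / (n+1) := by
    intro n y hy
    rw [intervalIntegral.integral_comp_sub_left (fun x => x ^ n) b]
    simp [integral_pow]
  have claim : ∀ k : ℕ, ∀ y ∈ Set.Icc a b,
      ‖g y‖ ≤ M * C^(2*k) * (b - y)^(2*k) / (2*k) ! := by
    intro k
    induction k with
    | zero => intro y hy; simpa using hgM y hy
    | succ k ih =>
      have hf0 : ((2*k) ! : ℝ) ≠ 0 := by
        exact_mod_cast (Nat.factorial_pos (2*k)).ne'
      have hf1 : ((2*k+1) ! : ℝ) ≠ 0 := by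
        exact_mod_cast (Nat.factorial_pos (2*k+1)).ne'
      -- first, a bound on g₁
      have bnd1 : ∀ y ∈ Set.Icc a b,
          ‖g₁ y‖ ≤ M * C^(2*k+1) * (b - y)^(2*k+1) / (2*k+1) ! := by
        intro y hy
        have hyb : y ≤ b := hy.2
        have hsub : Set.Icc y b ⊆ Set.Icc a b := Set.Icc_subset_Icc hy.1 le_rfl
        have hsubIoc : Set.Ioc y b ⊆ Set.Icc a b :=
          Set.Ioc_subset_Icc_self.trans hsub
        have hsubu : Set.uIcc y b ⊆ Set.Icc a b := by
          rw [Set.uIcc_of_le hyb]; exact hsub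
        have hii2 : IntervalIntegrable (fun t => ‖g₂ t‖) volume y b := by
          rw [intervalIntegrable_iff_integrableOn_Ioc_of_le hyb]
          exact (h2int.mono_set hsubIoc).norm
        have hiig : IntervalIntegrable (fun t => Cq * ‖g t‖) volume y b := by
          apply ContinuousOn.intervalIntegrable
          rw [Set.uIcc_of_le hyb]
          exact continuousOn_const.mul (hgc.mono hsub).norm
        have hpoly : IntervalIntegrable
            (fun t => Cq * (M * C^(2*k) * (b - t)^(2*k) / (2*k) !)) volume y b := by
          apply Continuous.intervalIntegrable
          fun_prop
        have hae : (fun t => ‖g₂ t‖) ≤ᵐ[volume.restrict (Set.Icc y b)]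
            fun t => Cq * ‖g t‖ := by
          filter_upwards [ae_restrict_of_ae hbound, ae_restrict_mem measurableSet_Icc]
            with t h1 h2
          exact h1 (hsub h2)
        have hby : 0 ≤ b - y := by linarith
        calc ‖g₁ y‖ = ‖∫ t in y..b, g₂ t‖ := by rw [hrep1 y hy, norm_neg]
          _ ≤ ∫ t in y..b, ‖g₂ t‖ := intervalIntegral.norm_integral_le_integral_norm hyb
          _ ≤ ∫ t in y..b, Cq * ‖g t‖ :=
              intervalIntegral.integral_mono_ae_restrict hyb hii2 hiig hae
          _ ≤ ∫ t in y..b, Cq * (M * C^(2*k) * (b - t)^(2*k) / (2*k) !) := by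
              apply intervalIntegral.integral_mono_on hyb hiig hpoly
              intro t ht
              exact mul_le_mul_of_nonneg_left (ih t (hsub ht)) hCq
          _ = Cq * (M * C^(2*k) / (2*k) !) * ∫ t in y..b, (b - t)^(2*k) := by
              rw [← intervalIntegral.integral_const_mul]
              congr 1; funext t; ring
          _ = Cq * (M * C^(2*k) / (2*k) !) * ((b - y)^(2*k+1) / (2*k+1)) := by
              rw [hpow (2*k) y hyb]; push_cast; ring
          _ = Cq * (M * C^(2*k) * (b - y)^(2*k+1) / ((2*k) ! * (2*k+1))) := by
              push_cast
              field_simp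
          _ ≤ C * (M * C^(2*k) * (b - y)^(2*k+1) / ((2*k) ! * (2*k+1))) := by
              apply mul_le_mul_of_nonneg_right hCqC
              apply div_nonneg
              · exact mul_nonneg (mul_nonneg hM (pow_nonneg hC0 _)) (pow_nonneg hby _)
              · positivity
          _ = M * C^(2*k+1) * (b - y)^(2*k+1) / (2*k+1) ! := by
              rw [Nat.factorial_succ]
              push_cast
              field_simp
              ring
      -- now the bound on g
      intro y hy
      have hyb : y ≤ b := hy.2
      have hby : 0 ≤ b - y := by linarith
      have hsub : Set.Icc y b ⊆ Set.Icc a b := Set.Icc_subset_Icc hy.1 le_rfl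
      have hsubu : Set.uIcc y b ⊆ Set.Icc a b := by
        rw [Set.uIcc_of_le hyb]; exact hsub
      have hii1 : IntervalIntegrable (fun t => ‖g₁ t‖) volume y b := by
        apply ContinuousOn.intervalIntegrable
        rw [Set.uIcc_of_le hyb]
        exact (hg1c.mono hsub).norm
      have hpoly : IntervalIntegrable
          (fun t => M * C^(2*k+1) * (b - t)^(2*k+1) / (2*k+1) !) volume y b := by
        apply Continuous.intervalIntegrable
        fun_prop
      have e2 : 2*(k+1) = 2*k+1+1 := by ring
      calc ‖g y‖ = ‖∫ t in y..b, g₁ t‖ := by rw [hrep y hy, norm_neg]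
        _ ≤ ∫ t in y..b, ‖g₁ t‖ := intervalIntegral.norm_integral_le_integral_norm hyb
        _ ≤ ∫ t in y..b, M * C^(2*k+1) * (b - t)^(2*k+1) / (2*k+1) ! := by
            apply intervalIntegral.integral_mono_on hyb hii1 hpoly
            intro t ht
            exact bnd1 t (hsub ht)
        _ = (M * C^(2*k+1) / (2*k+1) !) * ∫ t in y..b, (b - t)^(2*k+1) := by
            rw [← intervalIntegral.integral_const_mul]
            congr 1; funext t; ring
        _ = (M * C^(2*k+1) / (2*k+1) !) * ((b - y)^(2*k+1+1) / (2*k+1+1)) := by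
            rw [hpow (2*k+1) y hyb]; push_cast; ring
        _ ≤ (M * C^(2*k+1+1) / (2*k+1) !) * ((b - y)^(2*k+1+1) / (2*k+1+1)) := by
            have hCpow : C^(2*k+1) ≤ C^(2*k+1+1) := pow_le_pow_right₀ hC1 (by omega)
            apply mul_le_mul_of_nonneg_right
            · exact (div_le_div_iff_of_pos_right (by positivity)).mpr (mul_le_mul_of_nonneg_left hCpow hM)
            · exact div_nonneg (pow_nonneg hby _) (by positivity)
        _ = M * C^(2*(k+1)) * (b - y)^(2*(k+1)) / (2*(k+1)) ! := by
            rw [e2, Nat.factorial_succ (2*k+1)]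
            push_cast
            field_simp
  -- conclude by letting k → ∞
  intro y hy
  have hby : 0 ≤ b - y := by linarith [hy.2]
  have h2top : Tendsto (fun k : ℕ => 2*k) atTop atTop :=
    tendsto_atTop_atTop_of_monotone (fun m n h => by omega) (fun n => ⟨n, by omega⟩)
  have hlim0 : Tendsto (fun n : ℕ => (C*(b-y))^n / n !) atTop (nhds 0) :=
    FloorSemiring.tendsto_pow_div_factorial_atTop (C*(b-y))
  have hlim : Tendsto (fun k : ℕ => M * ((C*(b-y))^(2*k) / (2*k) !)) atTop (nhds 0) := by
    have := (hlim0.comp h2top).const_mul M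
    simpa using this
  have hle : ‖g y‖ ≤ 0 := by
    apply ge_of_tendsto hlim
    filter_upwards with k
    calc ‖g y‖ ≤ M * C^(2*k) * (b - y)^(2*k) / (2*k) ! := claim k y hy
      _ = M * ((C*(b-y))^(2*k) / (2*k) !) := by rw [mul_pow]; ring
  simpa using le_antisymm hle (norm_nonneg _)

/-- null space computation in the proof of Lemma 5.1: a solution `g` of the
homogeneous equation `c₀²(λ²|ω̄|²/c₊² + D_y²)g - λ²g = 0` (with `g`, `g'` absolutely
continuous, encoded via integral representations with `g' = g₁`, `g'' = g₂`) satisfying the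
adjoint boundary conditions `-iλω_n/c₊·g(y_M) + g'(y_M) = 0` and
`iλ(1/c₋² - |ω̄|²/c₊²)^{1/2} g(-y_M) + g'(-y_M) = 0` vanishes identically. -/
theorem stmt9 {d : ℕ} (S : SoundSpeed) (lam : ℝ) (hlam : lam ≠ 0)
    (ω : ES (d+1)) (hω : ‖ω‖ = 1) (hωn : 0 < ycoord ω)
    (hcond : ‖xpart ω‖^2 / S.cp^2 ≤ 1 / S.cn^2)
    (g g₁ g₂ : ℝ → ℂ)
    (hint : IntegrableOn g₂ (Set.Icc (-S.yM) S.yM) volume)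
    (hg₁ : ∀ y ∈ Set.Icc (-S.yM) S.yM, g₁ y = g₁ (-S.yM) + ∫ t in (-S.yM)..y, g₂ t)
    (hg : ∀ y ∈ Set.Icc (-S.yM) S.yM, g y = g (-S.yM) + ∫ t in (-S.yM)..y, g₁ t)
    (hL2 : IntegrableOn (fun y => ‖g y‖^2 / (S.c0 y)^2) (Set.Icc (-S.yM) S.yM) volume)
    (heq : ∀ᵐ y : ℝ, y ∈ Set.Icc (-S.yM) S.yM →
      ((S.c0 y)^2 : ℂ) * (((lam^2 * ‖xpart ω‖^2 / S.cp^2 : ℝ) : ℂ) * g y - g₂ y)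
        - ((lam^2 : ℝ) : ℂ) * g y = 0)
    (hbc₁ : (-Complex.I * ((lam * ycoord ω / S.cp : ℝ) : ℂ)) * g S.yM + g₁ S.yM = 0)
    (hbc₂ : (Complex.I * ((lam * Real.sqrt (1/S.cn^2 - ‖xpart ω‖^2/S.cp^2) : ℝ) : ℂ))
        * g (-S.yM) + g₁ (-S.yM) = 0) :
    ∀ y ∈ Set.Icc (-S.yM) S.yM, g y = 0 := by
  have hab : -S.yM ≤ S.yM := by linarith [S.hyM_pos]
  have hcm := S.hcm_pos
  have hcp : 0 < S.cp := by
    have h1 := (S.hc0_bounds (S.yM+1)).1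
    have h2 := S.hc0_plus (S.yM+1) (by linarith [S.hyM_pos])
    linarith
  set K : ℝ := lam^2 * ‖xpart ω‖^2 / S.cp^2 with hKdef
  have hK0 : 0 ≤ K := by positivity
  -- pointwise a.e. formula for g₂
  have heq' : ∀ᵐ t : ℝ, t ∈ Set.Icc (-S.yM) S.yM →
      g₂ t = ((K - lam^2/(S.c0 t)^2 : ℝ) : ℂ) * g t := by
    filter_upwards [heq] with t ht hmem
    have h0 : (S.c0 t) ≠ 0 := by have := (S.hc0_bounds t).1; linarith
    have h0' : ((S.c0 t : ℝ) : ℂ) ≠ 0 := Complex.ofReal_ne_zero.mpr h0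
    have h0c : ((S.c0 t : ℝ) : ℂ)^2 ≠ 0 := pow_ne_zero 2 h0'
    have hteq := ht hmem
    have key : ((S.c0 t : ℝ) : ℂ)^2 * g₂ t
        = ((S.c0 t : ℝ) : ℂ)^2 * ((K : ℝ) : ℂ) * g t - ((lam^2 : ℝ) : ℂ) * g t := by
      linear_combination -hteq
    apply mul_left_cancel₀ h0c
    rw [key]
    push_cast
    field_simp
  -- continuity of g₁ and g
  have huIcc : Set.uIcc (-S.yM) S.yM = Set.Icc (-S.yM) S.yM := Set.uIcc_of_le hab
  have hg1cont : ContinuousOn g₁ (Set.Icc (-S.yM) S.yM) := by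
    have hP : ContinuousOn (fun y => ∫ t in (-S.yM)..y, g₂ t) (Set.Icc (-S.yM) S.yM) := by
      have := intervalIntegral.continuousOn_primitive_interval (a := -S.yM) (b := S.yM)
        (f := g₂) (μ := volume) (by rwa [huIcc])
      rwa [huIcc] at this
    exact (continuousOn_const.add hP).congr (fun y hy => hg₁ y hy)
  have hg1int : IntegrableOn g₁ (Set.Icc (-S.yM) S.yM) volume := hg1cont.integrableOn_Icc
  have hgcont : ContinuousOn g (Set.Icc (-S.yM) S.yM) := by
    have hP : ContinuousOn (fun y => ∫ t in (-S.yM)..y, g₁ t) (Set.Icc (-S.yM) S.yM) := by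
      have := intervalIntegral.continuousOn_primitive_interval (a := -S.yM) (b := S.yM)
        (f := g₁) (μ := volume) (by rwa [huIcc])
      rwa [huIcc] at this
    exact (continuousOn_const.add hP).congr (fun y hy => hg y hy)
  have hconjg1cont : ContinuousOn (fun t => (starRingEnd ℂ) (g₁ t)) (Set.Icc (-S.yM) S.yM) :=
    RCLike.continuous_conj.comp_continuousOn hg1cont
  have hconjgcont : ContinuousOn (fun t => (starRingEnd ℂ) (g t)) (Set.Icc (-S.yM) S.yM) :=
    RCLike.continuous_conj.comp_continuousOn hgcont
  -- conjugated integral representation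
  have hHrep : ∀ y ∈ Set.Icc (-S.yM) S.yM,
      (starRingEnd ℂ) (g y) = (starRingEnd ℂ) (g (-S.yM))
        + ∫ t in (-S.yM)..y, (starRingEnd ℂ) (g₁ t) := by
    intro y hy
    rw [hg y hy, map_add]
    congr 1
    rw [intervalIntegral.integral_of_le hy.1, intervalIntegral.integral_of_le hy.1,
      integral_conj]
  -- integration by parts identity
  have key := prod_rep hab hint (hconjg1cont.integrableOn_Icc) hg₁ hHrep
  -- the right side has zero imaginary part
  have hIm : (∫ t in Set.Ioc (-S.yM) S.yM,
      (g₂ t * (starRingEnd ℂ) (g t) + g₁ t * (starRingEnd ℂ) (g₁ t))).im = 0 := by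
    have hInt : IntegrableOn
        (fun t => g₂ t * (starRingEnd ℂ) (g t) + g₁ t * (starRingEnd ℂ) (g₁ t))
        (Set.Ioc (-S.yM) S.yM) volume :=
      Integrable.add
        ((hint.mul_continuousOn hconjgcont isCompact_Icc).mono_set Set.Ioc_subset_Icc_self)
        (((hg1cont.mul hconjg1cont).integrableOn_Icc).mono_set Set.Ioc_subset_Icc_self)
    have hcomm := Complex.imCLM.integral_comp_comm hInt
    simp only [Complex.imCLM_apply] at hcomm
    rw [← hcomm]
    apply integral_eq_zero_of_ae
    filter_upwards [ae_restrict_of_ae heq', ae_restrict_mem measurableSet_Ioc] with t h1 h2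
    have ht := h1 (Set.Ioc_subset_Icc_self h2)
    rw [ht]
    simp only [Complex.add_im, Complex.mul_im, Complex.mul_re, Complex.ofReal_re,
      Complex.ofReal_im, Complex.conj_re, Complex.conj_im, Pi.zero_apply]
    ring
  set s : ℝ := Real.sqrt (1/S.cn^2 - ‖xpart ω‖^2/S.cp^2) with hsdef
  have e1 : g₁ S.yM = Complex.I * ((lam * ycoord ω / S.cp : ℝ) : ℂ) * g S.yM := by
    linear_combination hbc₁
  have e2 : g₁ (-S.yM) = -(Complex.I * ((lam * s : ℝ) : ℂ)) * g (-S.yM) := by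
    linear_combination hbc₂
  have him2 : (g₁ S.yM * (starRingEnd ℂ) (g S.yM)
      - g₁ (-S.yM) * (starRingEnd ℂ) (g (-S.yM))).im = 0 := by
    rw [key]; exact hIm
  rw [e1, e2] at him2
  have hlin : lam * ycoord ω / S.cp * Complex.normSq (g S.yM)
      + lam * s * Complex.normSq (g (-S.yM)) = 0 := by
    have h := him2
    simp only [Complex.sub_im, Complex.mul_im, Complex.mul_re, Complex.I_re, Complex.I_im,
      Complex.ofReal_re, Complex.ofReal_im, Complex.neg_re, Complex.neg_im,
      Complex.conj_re, Complex.conj_im] at h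
    simp only [Complex.normSq_apply]
    linear_combination h
  have hsnn : 0 ≤ s := Real.sqrt_nonneg _
  have hna : 0 ≤ Complex.normSq (g (-S.yM)) := Complex.normSq_nonneg _
  have hnb : 0 ≤ Complex.normSq (g S.yM) := Complex.normSq_nonneg _
  have hωcp : 0 < ycoord ω / S.cp := div_pos hωn hcp
  have hA : (ycoord ω / S.cp) * Complex.normSq (g S.yM) + s * Complex.normSq (g (-S.yM)) = 0 := by
    have h2 : lam * ((ycoord ω / S.cp) * Complex.normSq (g S.yM)
        + s * Complex.normSq (g (-S.yM))) = 0 := by linear_combination hlin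
    exact (mul_eq_zero.mp h2).resolve_left hlam
  have hb0 : Complex.normSq (g S.yM) = 0 := by
    have h1 : (ycoord ω / S.cp) * Complex.normSq (g S.yM) = 0 := by
      nlinarith [mul_nonneg hsnn hna, mul_nonneg hωcp.le hnb]
    exact (mul_eq_zero.mp h1).resolve_left hωcp.ne'
  have hgb : g S.yM = 0 := Complex.normSq_eq_zero.mp hb0
  have hg1b : g₁ S.yM = 0 := by rw [e1, hgb, mul_zero]
  -- part 2: Gronwall-type iteration
  set Cq : ℝ := K + lam^2 / S.cm^2 with hCqdef
  have hCq0 : 0 ≤ Cq := by positivity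
  have hbound : ∀ᵐ t : ℝ, t ∈ Set.Icc (-S.yM) S.yM → ‖g₂ t‖ ≤ Cq * ‖g t‖ := by
    filter_upwards [heq'] with t h1 h2
    rw [h1 h2, norm_mul, Complex.norm_real]
    have hc := (S.hc0_bounds t).1
    have hc2 : S.cm^2 ≤ (S.c0 t)^2 := by nlinarith
    have hx1 : 0 ≤ lam^2/(S.c0 t)^2 := by positivity
    have hx2 : lam^2/(S.c0 t)^2 ≤ lam^2/S.cm^2 := by
      apply div_le_div_of_nonneg_left (by positivity) (by positivity) hc2
    have habs : ‖K - lam^2/(S.c0 t)^2‖ ≤ Cq := by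
      rw [Real.norm_eq_abs, abs_le]
      constructor <;> [linarith; linarith]
    exact mul_le_mul_of_nonneg_right habs (norm_nonneg _)
  have hiig₁ : ∀ y ∈ Set.Icc (-S.yM) S.yM, IntervalIntegrable g₁ volume (-S.yM) y := by
    intro y hy
    apply ContinuousOn.intervalIntegrable
    rw [Set.uIcc_of_le hy.1]
    exact hg1cont.mono (Set.Icc_subset_Icc le_rfl hy.2)
  have hiig₂ : ∀ y ∈ Set.Icc (-S.yM) S.yM, IntervalIntegrable g₂ volume (-S.yM) y := by
    intro y hy
    rw [intervalIntegrable_iff_integrableOn_Ioc_of_le hy.1]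
    exact hint.mono_set ((Set.Ioc_subset_Icc_self).trans (Set.Icc_subset_Icc le_rfl hy.2))
  have hmemb : S.yM ∈ Set.Icc (-S.yM) S.yM := ⟨hab, le_rfl⟩
  have hrep : ∀ y ∈ Set.Icc (-S.yM) S.yM, g y = - ∫ t in y..S.yM, g₁ t := by
    intro y hy
    have h1 := hg y hy
    have h2 := hg S.yM hmemb
    rw [hgb] at h2
    have h3 : (∫ t in (-S.yM)..S.yM, g₁ t) - ∫ t in (-S.yM)..y, g₁ t
        = ∫ t in y..S.yM, g₁ t :=
      intervalIntegral.integral_interval_sub_left (hiig₁ S.yM hmemb) (hiig₁ y hy)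
    linear_combination h1 - h2 - h3
  have hrep1 : ∀ y ∈ Set.Icc (-S.yM) S.yM, g₁ y = - ∫ t in y..S.yM, g₂ t := by
    intro y hy
    have h1 := hg₁ y hy
    have h2 := hg₁ S.yM hmemb
    rw [hg1b] at h2
    have h3 : (∫ t in (-S.yM)..S.yM, g₂ t) - ∫ t in (-S.yM)..y, g₂ t
        = ∫ t in y..S.yM, g₂ t :=
      intervalIntegral.integral_interval_sub_left (hiig₂ S.yM hmemb) (hiig₂ y hy)
    linear_combination h1 - h2 - h3
  obtain ⟨M0, hM0⟩ := isCompact_Icc.exists_bound_of_continuousOn hgcont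
  have hgM : ∀ y ∈ Set.Icc (-S.yM) S.yM, ‖g y‖ ≤ max M0 0 :=
    fun y hy => (hM0 y hy).trans (le_max_left _ _)
  exact vanish_of_rep hCq0 (le_max_right _ _) hgM hg1cont hgcont hint hrep hrep1 hbound
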